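/- Let F be a function holomorphic on the open horizontal strip S = {z ∈ ℂ : 0 < Im z < α} and continuous on its closure, and suppose F vanishes on a nonempty open interval of the real axis. Then F vanishes identically on the closed strip. -/

import Mathlib

/-!
Extend `F` by `0` below the real axis. Since `F` vanishes on `(a, b)`, the extension is continuous
on the box `(a, b) × (-α, α)` and holomorphic off the real line. Such a function is holomorphic:
cutting a rectangle along the line leaves two rectangles on whose interiors it is holomorphic, so
by Cauchy–Goursat its rectangle integrals vanish and Morera's theorem applies. The extension
vanishes on the lower half of the box, so by the identity theorem `F` vanishes on the upper half,
and then, by the identity theorem on the strip and continuity, on the closed strip.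
-/

open Complex Set
open scoped Interval ComplexConjugate

namespace Complex

variable {E : Type*} [NormedAddCommGroup E] [NormedSpace ℂ E] {f : ℂ → E} {z w : ℂ} {c : ℝ}

theorem wedgeIntegral_add_wedgeIntegral_split_im (hf : ContinuousOn f (Rectangle z w))
    (hc : c ∈ [[z.im, w.im]]) :
    wedgeIntegral z w f + wedgeIntegral w z f =
      (wedgeIntegral z (w.re + c * I : ℂ) f + wedgeIntegral (w.re + c * I : ℂ) z f) +
      (wedgeIntegral (z.re + c * I : ℂ) w f + wedgeIntegral w (z.re + c * I : ℂ) f) := by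
  have hvert : ∀ x ∈ [[z.re, w.re]], ∀ s t, s ∈ [[z.im, w.im]] → t ∈ [[z.im, w.im]] →
      IntervalIntegrable (fun y : ℝ ↦ f (x + y * I)) MeasureTheory.volume s t := by
    intro x hx s t hs ht
    refine (hf.comp (by fun_prop) fun y hy ↦ ⟨?_, ?_⟩).intervalIntegrable
    · simpa using hx
    · simpa using uIcc_subset_uIcc hs ht hy
  simp only [wedgeIntegral_add_wedgeIntegral_eq, add_re, ofReal_re, mul_re, I_re, I_im,
    ofReal_im, add_im, mul_im, mul_zero, mul_one, sub_zero, add_zero, zero_add]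
  rw [← intervalIntegral.integral_add_adjacent_intervals
      (hvert w.re right_mem_uIcc z.im c left_mem_uIcc hc)
      (hvert w.re right_mem_uIcc c w.im hc right_mem_uIcc),
    ← intervalIntegral.integral_add_adjacent_intervals
      (hvert z.re left_mem_uIcc z.im c left_mem_uIcc hc)
      (hvert z.re left_mem_uIcc c w.im hc right_mem_uIcc),
    smul_add, smul_add]
  abel

theorem isConservativeOn_of_differentiableOn_diff_im_eq {U : Set ℂ} (hfc : ContinuousOn f U)
    (hfd : DifferentiableOn ℂ f (U \ {z | z.im = c})) : IsConservativeOn f U := by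
  have off_line : ∀ z w, Rectangle z w ⊆ U → c ∉ Ioo (min z.im w.im) (max z.im w.im) →
      wedgeIntegral z w f + wedgeIntegral w z f = 0 := fun z w hU hc ↦ by
    rw [wedgeIntegral_add_wedgeIntegral_eq]
    refine integral_boundary_rect_eq_zero_of_continuousOn_of_differentiableOn f z w
      (hfc.mono hU) (hfd.mono fun p hp ↦ ⟨hU ?_, fun hpc ↦ hc (hpc ▸ hp.2)⟩)
    exact ⟨Ioo_subset_Icc_self hp.1, Ioo_subset_Icc_self hp.2⟩
  intro z w hU
  rw [← add_eq_zero_iff_eq_neg]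
  by_cases hc : c ∈ [[z.im, w.im]]
  · rw [wedgeIntegral_add_wedgeIntegral_split_im (hfc.mono hU) hc]
    have hlow : Rectangle z (w.re + c * I) ⊆ U := fun p hp ↦
      hU ⟨by simpa using hp.1, uIcc_subset_uIcc_left hc (by simpa using hp.2)⟩
    have hup : Rectangle (z.re + c * I) w ⊆ U := fun p hp ↦
      hU ⟨by simpa using hp.1, uIcc_subset_uIcc_right hc (by simpa using hp.2)⟩
    rw [off_line _ _ hlow (by simpa using le_of_lt), off_line _ _ hup (by simpa using le_of_lt),
      add_zero]
  · exact off_line z w hU fun h ↦ hc (Ioo_subset_Icc_self h)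

variable [CompleteSpace E]

theorem differentiableOn_of_differentiableOn_diff_im_eq {U : Set ℂ} (hU : IsOpen U)
    (hfc : ContinuousOn f U) (hfd : DifferentiableOn ℂ f (U \ {z | z.im = c})) :
    DifferentiableOn ℂ f U :=
  (isConservativeOn_and_continuousOn_iff_isDifferentiableOn hU).mp
    ⟨isConservativeOn_of_differentiableOn_diff_im_eq hfc hfd, hfc⟩

theorem eqOn_zero_of_eq_zero_on_bottom_edge {F : ℂ → E} {a b h : ℝ}
    (hd : DifferentiableOn ℂ F (Ioo a b ×ℂ Ioo 0 h)) (hc : ContinuousOn F (Ioo a b ×ℂ Ico 0 h))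
    (hF : ∀ x ∈ Ioo a b, F x = 0) : EqOn F 0 (Ioo a b ×ℂ Ioo 0 h) := by
  classical
  set V := Ioo a b ×ℂ Ioo (-h) h
  set G := {z : ℂ | 0 < z.im}.piecewise F 0
  have hV : IsOpen V := isOpen_Ioo.reProdIm isOpen_Ioo
  have hGc : ContinuousOn G V := by
    refine ContinuousOn.piecewise ?_ (hc.mono ?_) continuousOn_const
    · rintro z ⟨hzV, hz⟩
      rw [frontier_setOfPred_lt_im] at hz
      rw [← re_add_im z, show z.im = 0 from hz, ofReal_zero, zero_mul, add_zero]
      exact hF _ hzV.1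
    · rintro z ⟨hzV, hz⟩
      rw [closure_setOfPred_lt_im] at hz
      exact ⟨hzV.1, hz, hzV.2.2⟩
  have hGd : DifferentiableOn ℂ G (V \ {z | z.im = 0}) := by
    rintro z ⟨hzV, hz0⟩
    refine DifferentiableAt.differentiableWithinAt ?_
    rcases lt_or_gt_of_ne (hz0 : z.im ≠ 0) with hneg | hpos
    · refine (differentiableAt_const 0).congr_of_eventuallyEq ?_
      filter_upwards [(continuous_im.isOpen_preimage _ isOpen_Iio).mem_nhds hneg] with w hw
      exact piecewise_eq_of_notMem _ _ _ (show ¬ 0 < w.im from not_lt.mpr hw.le)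
    · have hzU : z ∈ Ioo a b ×ℂ Ioo 0 h := ⟨hzV.1, hpos, hzV.2.2⟩
      refine (hd.differentiableAt ((isOpen_Ioo.reProdIm isOpen_Ioo).mem_nhds hzU)
        ).congr_of_eventuallyEq ?_
      filter_upwards [(continuous_im.isOpen_preimage _ isOpen_Ioi).mem_nhds hpos] with w hw
      exact piecewise_eq_of_mem _ _ _ hw
  have hVconv : Convex ℝ V := by
    have := convex_convexHull ℝ (Ioo a b ×ℂ Ioo (-h) h)
    rwa [convexHull_reProdIm, (convex_Ioo _ _).convexHull_eq, (convex_Ioo _ _).convexHull_eq]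
      at this
  intro z ⟨hzre, hz0, hzh⟩
  have hzV : z ∈ V := ⟨hzre, by linarith, hzh⟩
  have hconj : conj z ∈ V := ⟨hzre, by rw [conj_im]; linarith, by rw [conj_im]; linarith⟩
  have hGV : EqOn G 0 V := by
    refine ((differentiableOn_of_differentiableOn_diff_im_eq hV hGc hGd).analyticOnNhd hV
      ).eqOn_zero_of_preconnected_of_eventuallyEq_zero hVconv.isPreconnected hconj ?_
    filter_upwards [(continuous_im.isOpen_preimage _ isOpen_Iio).mem_nhds
      (show (conj z).im < 0 by simpa using hz0)] with w hw
    exact piecewise_eq_of_notMem _ _ _ (show ¬ 0 < w.im from not_lt.mpr hw.le)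
  simpa [G, hz0] using hGV hzV

end Complex

/-- If `F` is holomorphic on the open strip `{0 < Im z < α}`, continuous on its
closure, and vanishes on a nonempty open interval `(a, b)` of the real axis, then `F` vanishes
identically on the closed strip. -/
theorem stmt_12 (α : ℝ) (hα : 0 < α) (F : ℂ → ℂ)
    (hd : DifferentiableOn ℂ F {z : ℂ | 0 < z.im ∧ z.im < α})
    (hc : ContinuousOn F (closure {z : ℂ | 0 < z.im ∧ z.im < α}))
    (a b : ℝ) (hab : a < b)
    (hvanish : ∀ x : ℝ, x ∈ Set.Ioo a b → F x = 0) :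
    ∀ z ∈ closure {z : ℂ | 0 < z.im ∧ z.im < α}, F z = 0 := by
  set S : Set ℂ := im ⁻¹' Ioo 0 α
  have hbox : Ioo a b ×ℂ Ioo 0 α ⊆ S := fun w hw ↦ hw.2
  have hbox_closure : Ioo a b ×ℂ Ico 0 α ⊆ closure S := by
    rw [closure_preimage_im, closure_Ioo hα.ne]
    exact fun w hw ↦ Ico_subset_Icc_self hw.2
  have hFbox : EqOn F 0 (Ioo a b ×ℂ Ioo 0 α) :=
    eqOn_zero_of_eq_zero_on_bottom_edge (hd.mono hbox) (hc.mono hbox_closure) hvanish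
  set p : ℂ := ((a + b) / 2 : ℝ) + ((α / 2 : ℝ) : ℂ) * I
  have hp : p ∈ Ioo a b ×ℂ Ioo 0 α := by
    simp only [p, mem_reProdIm, add_re, add_im, ofReal_re, ofReal_im, mul_re, mul_im, I_re, I_im]
    constructor <;> constructor <;> linarith
  have hS : EqOn F 0 S := by
    refine (hd.analyticOnNhd (isOpen_Ioo.preimage continuous_im)
      ).eqOn_zero_of_preconnected_of_eventuallyEq_zero
      ((convex_Ioo 0 α).is_linear_preimage imLm.isLinear).isPreconnected (hbox hp) ?_
    filter_upwards [(isOpen_Ioo.reProdIm isOpen_Ioo).mem_nhds hp] using hFbox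
  exact fun z hz ↦ hS.of_subset_closure hc continuousOn_const subset_closure le_rfl hz
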